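/- arXiv:2005.07867 — 2 statements merged into one kernel-verified Lean document; each statement's English description precedes it below -/
import Mathlib

section
/- Let A and B be disjoint finite sets, u ∈ L(A) and v ∈ L(B). Then the set u ⊕ v of all shuffles of u and v is a Condorcet domain on A ∪ B. -/
/-! Linear orders on a finite set `A` are encoded as duplicate-free lists
(top alternative first) whose set of entries is `A`. -/

variable {α β : Type*}

/-- `w` is a (strict) linear order on `A`, written from top to bottom. -/
def IsLinOrd [DecidableEq α] (A : Finset α) (w : List α) : Prop :=
  w.Nodup ∧ w.toFinset = A

/-- Restriction of the order `w` to the set `B`. -/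
def restr [DecidableEq α] (B : Finset α) (w : List α) : List α :=
  w.filter (fun x => decide (x ∈ B))

/-- Strict majority relation of a profile `P` (a list of linear orders):
`a` beats `b` iff strictly more orders of `P` rank `a` above `b`. -/
def Maj [DecidableEq α] (P : List (List α)) (a b : α) : Prop :=
  P.countP (fun w => decide (w.idxOf a < w.idxOf b)) >
    P.countP (fun w => decide (w.idxOf b < w.idxOf a))

/-- `D` is a Condorcet domain on `A`: all members are linear orders on `A` and
the majority relation of every odd profile over `D` is transitive. -/
def IsCondorcet [DecidableEq α] (A : Finset α) (D : Set (List α)) : Prop :=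
  (∀ w ∈ D, IsLinOrd A w) ∧
    ∀ P : List (List α), (∀ w ∈ P, w ∈ D) → Odd P.length →
      ∀ a ∈ A, ∀ b ∈ A, ∀ c ∈ A, Maj P a b → Maj P b c → Maj P a c

/-- The never condition `x N_{a,b,c} i` (1-based position `i`): no order of `D`
restricted to `{a,b,c}` has `x` in the `i`-th position. -/
def Never [DecidableEq α] (D : Set (List α)) (a b c x : α) (i : ℕ) : Prop :=
  ∀ w ∈ D, (restr {a, b, c} w)[i - 1]? ≠ some x

/-- `D` is a peak-pit domain on `A`: every triple satisfies a never-top or a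
never-bottom condition. -/
def PeakPit [DecidableEq α] (A : Finset α) (D : Set (List α)) : Prop :=
  ∀ a ∈ A, ∀ b ∈ A, ∀ c ∈ A, a ≠ b → a ≠ c → b ≠ c →
    ∃ x ∈ ({a, b, c} : Finset α), Never D a b c x 1 ∨ Never D a b c x 3

/-- Concatenation `D1 ⊙ D2` of two domains (all of `A` ranked above all of `B`). -/
def concatDom (D1 D2 : Set (List α)) : Set (List α) :=
  {w | ∃ x ∈ D1, ∃ y ∈ D2, w = x ++ y}

/-- The set `u ⊕ v` of all shuffles of `u ∈ L(A)` and `v ∈ L(B)`. -/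
def shuffles [DecidableEq α] (A B : Finset α) (u v : List α) : Set (List α) :=
  {w | IsLinOrd (A ∪ B) w ∧ restr A w = u ∧ restr B w = v}

/-- The tensor product `(D1 ⊗ D2)(u,v)` of Danilov–Karzanov–Koshevoy. -/
def tensor [DecidableEq α] (A B : Finset α) (D1 D2 : Set (List α))
    (u v : List α) : Set (List α) :=
  concatDom D1 D2 ∪ shuffles A B u v

/-- `D` has maximal width: it contains a pair of completely reversed orders. -/
def MaxWidth (D : Set (List α)) : Prop :=
  ∃ w ∈ D, w.reverse ∈ D

/-- `w'` is obtained from `w` by one swap of adjacent alternatives. -/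
def AdjSwap (w w' : List α) : Prop :=
  ∃ (l r : List α) (x y : α), w = l ++ x :: y :: r ∧ w' = l ++ y :: x :: r

/-- `D` is semi-connected: some order `w ∈ D` is joined to its reverse by a path
inside `D` of adjacent transpositions in which each pair of alternatives is
swapped exactly once (a maximal chain in the weak Bruhat order, of length
`C(|A|,2)`). -/
def SemiConnected (A : Finset α) (D : Set (List α)) : Prop :=
  ∃ (w : List α) (c : ℕ → List α), w ∈ D ∧ c 0 = w ∧
    c (A.card.choose 2) = w.reverse ∧
    (∀ i, i ≤ A.card.choose 2 → c i ∈ D) ∧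
    (∀ i, i < A.card.choose 2 → AdjSwap (c i) (c (i + 1)))

/-- `D` is a maximal Condorcet domain on `A`. -/
def MaxCondorcet [DecidableEq α] (A : Finset α) (D : Set (List α)) : Prop :=
  IsCondorcet A D ∧ ∀ D' : Set (List α), IsCondorcet A D' → D ⊆ D' → D' ⊆ D

/-- Cardinality of the Fishburn domain `F_n` (Galambos–Reiner formula). -/
def fishCard (n : ℕ) : ℕ :=
  (n + 3) * 2 ^ (n - 3) -
    (if Even n then (2 * n - 3) * (n - 2).choose (n / 2 - 1) / 2
     else (n - 1) / 2 * (n - 1).choose ((n - 1) / 2))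

/-! Every order in `u ⊕ v` ranks two alternatives of `A` as `u` does and two alternatives of `B`
as `v` does, so every profile over `u ⊕ v` is unanimous on such pairs. Among any three
alternatives two lie in the same block, and a majority chain `a > b > c` in which one of the three
pairs is ordered unanimously always closes up to `a > c` (a unanimous `c > a` would reverse
`b > c`). -/

theorem List.idxOf_filter_lt_idxOf_filter_iff [DecidableEq α] {p : α → Bool} {a b : α}
    (ha : p a) (hb : p b) (l : List α) :
    (l.filter p).idxOf a < (l.filter p).idxOf b ↔ l.idxOf a < l.idxOf b := by
  induction l with
  | nil => simp
  | cons x xs ih =>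
    by_cases hx : p x
    · by_cases hxa : x = a <;> by_cases hxb : x = b <;> simp_all [List.filter_cons_of_pos hx]
    · have hxa : x ≠ a := by rintro rfl; exact hx ha
      have hxb : x ≠ b := by rintro rfl; exact hx hb
      simp [List.filter_cons_of_neg hx, List.idxOf_cons_ne _ hxa, List.idxOf_cons_ne _ hxb, ih]

section Majority

variable [DecidableEq α] {P : List (List α)} {a b c : α}

theorem idxOf_lt_idxOf_iff_of_restr_eq {S : Finset α} {w w' : List α}
    (h : restr S w = restr S w') (ha : a ∈ S) (hb : b ∈ S) :
    w.idxOf a < w.idxOf b ↔ w'.idxOf a < w'.idxOf b := by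
  have key := List.idxOf_filter_lt_idxOf_filter_iff (p := fun x => decide (x ∈ S))
    (decide_eq_true ha) (decide_eq_true hb)
  unfold restr at h
  rw [← key w, h, key w']

def IsUnanimous (P : List (List α)) (a b : α) : Prop :=
  (∀ w ∈ P, w.idxOf a < w.idxOf b) ∨ ∀ w ∈ P, w.idxOf b < w.idxOf a

theorem isUnanimous_of_restr_eq {S : Finset α} {s : List α} (hP : ∀ w ∈ P, restr S w = s)
    (ha : a ∈ S) (hb : b ∈ S) (hab : a ≠ b) (hmem : ∀ w ∈ P, a ∈ w) : IsUnanimous P a b := by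
  by_cases h : ∃ w₀ ∈ P, w₀.idxOf a < w₀.idxOf b
  · obtain ⟨w₀, hw₀, hlt⟩ := h
    exact .inl fun w hw =>
      (idxOf_lt_idxOf_iff_of_restr_eq ((hP w hw).trans (hP w₀ hw₀).symm) ha hb).2 hlt
  · push Not at h
    exact .inr fun w hw =>
      (h w hw).lt_of_ne fun heq => hab ((List.idxOf_inj (hmem w hw)).1 heq.symm)

theorem Maj.ne (h : Maj P a b) : a ≠ b := by
  rintro rfl
  exact lt_irrefl _ h

theorem Maj.asymm (h : Maj P a b) : ¬Maj P b a :=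
  lt_asymm h

theorem Maj.exists_idxOf_lt (h : Maj P a b) : ∃ w ∈ P, w.idxOf a < w.idxOf b := by
  simpa using List.countP_pos_iff.mp (Nat.zero_lt_of_lt h)

theorem Maj.ne_nil (h : Maj P a b) : P ≠ [] := by
  rintro rfl
  simpa using h.exists_idxOf_lt

theorem maj_of_forall_idxOf_lt (hP : P ≠ []) (h : ∀ w ∈ P, w.idxOf a < w.idxOf b) :
    Maj P a b := by
  have hab : P.countP (fun w => decide (w.idxOf a < w.idxOf b)) = P.length :=
    List.countP_eq_length.mpr fun w hw => decide_eq_true (h w hw)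
  have hba : P.countP (fun w => decide (w.idxOf b < w.idxOf a)) = 0 :=
    List.countP_eq_zero.mpr fun w hw hlt => (h w hw).asymm (of_decide_eq_true hlt)
  simp only [Maj, hab, hba, gt_iff_lt, List.length_pos_iff]
  exact hP

theorem maj_of_forall_idxOf_lt_of_maj (h : ∀ w ∈ P, w.idxOf a < w.idxOf b) (hbc : Maj P b c) :
    Maj P a c :=
  calc P.countP (fun w => decide (w.idxOf c < w.idxOf a))
      ≤ P.countP (fun w => decide (w.idxOf c < w.idxOf b)) :=
        List.countP_mono_left fun w hw hca => by simpa using (of_decide_eq_true hca).trans (h w hw)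
    _ < P.countP (fun w => decide (w.idxOf b < w.idxOf c)) := hbc
    _ ≤ P.countP (fun w => decide (w.idxOf a < w.idxOf c)) :=
        List.countP_mono_left fun w hw hbc => by simpa using (h w hw).trans (of_decide_eq_true hbc)

theorem maj_of_maj_of_forall_idxOf_lt (hab : Maj P a b) (h : ∀ w ∈ P, w.idxOf b < w.idxOf c) :
    Maj P a c :=
  calc P.countP (fun w => decide (w.idxOf c < w.idxOf a))
      ≤ P.countP (fun w => decide (w.idxOf b < w.idxOf a)) :=
        List.countP_mono_left fun w hw hca => by simpa using (h w hw).trans (of_decide_eq_true hca)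
    _ < P.countP (fun w => decide (w.idxOf a < w.idxOf b)) := hab
    _ ≤ P.countP (fun w => decide (w.idxOf a < w.idxOf c)) :=
        List.countP_mono_left fun w hw hab => by simpa using (of_decide_eq_true hab).trans (h w hw)

theorem IsUnanimous.forall_idxOf_lt_of_maj (hU : IsUnanimous P a b) (h : Maj P a b) :
    ∀ w ∈ P, w.idxOf a < w.idxOf b := by
  refine hU.resolve_right fun hba => ?_
  obtain ⟨w, hw, hab⟩ := h.exists_idxOf_lt
  exact (hba w hw).asymm hab

theorem Maj.trans_of_isUnanimous (hab : Maj P a b) (hbc : Maj P b c)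
    (hU : IsUnanimous P a b ∨ IsUnanimous P b c ∨ IsUnanimous P a c) : Maj P a c := by
  rcases hU with hU | hU | hac | hca
  · exact maj_of_forall_idxOf_lt_of_maj (hU.forall_idxOf_lt_of_maj hab) hbc
  · exact maj_of_maj_of_forall_idxOf_lt hab (hU.forall_idxOf_lt_of_maj hbc)
  · exact maj_of_forall_idxOf_lt hab.ne_nil hac
  · exact absurd (maj_of_forall_idxOf_lt_of_maj hca hab) hbc.asymm

end Majority

theorem isUnanimous_of_forall_mem_shuffles [DecidableEq α] {A B : Finset α} {u v : List α}
    {P : List (List α)} (hP : ∀ w ∈ P, w ∈ shuffles A B u v) {a b : α} (ha : a ∈ A ∪ B)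
    (hb : b ∈ A ∪ B) (hab : a ≠ b) (hA : a ∈ A ↔ b ∈ A) : IsUnanimous P a b := by
  have hmem : ∀ w ∈ P, a ∈ w := fun w hw => by
    rw [← List.mem_toFinset, (hP w hw).1.2]
    exact ha
  by_cases haA : a ∈ A
  · exact isUnanimous_of_restr_eq (fun w hw => (hP w hw).2.1) haA (hA.1 haA) hab hmem
  · have haB := (Finset.mem_union.1 ha).resolve_left haA
    have hbB := (Finset.mem_union.1 hb).resolve_left (mt hA.2 haA)
    exact isUnanimous_of_restr_eq (fun w hw => (hP w hw).2.2) haB hbB hab hmem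

theorem stmt_4_general [DecidableEq α] (A B : Finset α) (u v : List α) :
    IsCondorcet (A ∪ B) (shuffles A B u v) := by
  refine ⟨fun w hw => hw.1, fun P hP _ a ha b hb c hc hab hbc => ?_⟩
  have hac : a ≠ c := by
    rintro rfl
    exact hab.asymm hbc
  have hblock : (a ∈ A ↔ b ∈ A) ∨ (b ∈ A ↔ c ∈ A) ∨ (a ∈ A ↔ c ∈ A) := by tauto
  exact hab.trans_of_isUnanimous hbc <|
    hblock.imp (isUnanimous_of_forall_mem_shuffles hP ha hb hab.ne)
      (Or.imp (isUnanimous_of_forall_mem_shuffles hP hb hc hbc.ne)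
        (isUnanimous_of_forall_mem_shuffles hP ha hc hac))

/-- the set `u ⊕ v` of all shuffles of `u` and `v` is a Condorcet
domain on `A ∪ B`. -/
theorem stmt_4 [DecidableEq α] (A B : Finset α) (hAB : Disjoint A B)
    (u v : List α) (hu : IsLinOrd A u) (hv : IsLinOrd B v) :
    IsCondorcet (A ∪ B) (shuffles A B u v) :=
  stmt_4_general A B u v
end

section
/- Let D1, D2 be peak-pit Condorcet domains on disjoint finite sets A and B, and u ∈ D1, v ∈ D2. Then (D1 ⊗ D2)(u,v) = (D1 ⊙ D2) ∪ (u ⊕ v) is a peak-pit domain: for every 3-element subset of A ∪ B it satisfies a never-top or never-bottom condition. -/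
/-! Linear orders on a finite set `A` are encoded as duplicate-free lists
(top alternative first) whose set of entries is `A`. -/

variable {α β : Type*}

/-! An order `w` ranks `x` above `y` iff `[x, y] <+ w`.

For a triple inside `A`, every order of `(D1 ⊗ D2)(u,v)` restricts to it as some order of `D1`
does (a concatenation `p ++ q` as `p`, a shuffle as `u`), so the never condition of `D1` is
inherited; likewise inside `B`. For `x, y ∈ A`, `z ∈ B` with `x` above `y` in `u`, every order
of the tensor product puts `x` above `y` (shuffles) or above `z` (concatenations), so `x` is
never bottom; dually, for `x ∈ A`, `y, z ∈ B` with `y` above `z` in `v`, `z` is never top. -/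

open scoped List

namespace List

variable {l : List α} {x y : α}

theorem pair_sublist_or_pair_sublist (hx : x ∈ l) (hy : y ∈ l) (hxy : x ≠ y) :
    [x, y] <+ l ∨ [y, x] <+ l := by
  induction l with
  | nil => simp at hx
  | cons z t ih =>
    rcases mem_cons.mp hx with rfl | hxt <;> rcases mem_cons.mp hy with rfl | hyt
    · exact absurd rfl hxy
    · exact .inl ((singleton_sublist.mpr hyt).cons_cons x)
    · exact .inr ((singleton_sublist.mpr hxt).cons_cons y)
    · exact (ih hxt hyt).imp (·.cons z) (·.cons z)

theorem getElem?_zero_ne_of_pair_sublist (hl : l.Nodup) (h : [y, x] <+ l) :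
    l[0]? ≠ some x := by
  intro h0
  obtain ⟨t, rfl⟩ : ∃ t, l = x :: t := by
    cases l with
    | nil => simp at h0
    | cons z t => exact ⟨t, by simpa using h0⟩
  have hxt : x ∈ t := by
    rcases sublist_cons_iff.mp h with h | ⟨r, hr, hrt⟩
    · exact h.subset (by simp)
    · obtain ⟨rfl, rfl⟩ := cons_eq_cons.mp hr
      exact singleton_sublist.mp hrt
  exact (nodup_cons.mp hl).1 hxt

theorem getElem?_two_ne_of_pair_sublist (hl : l.Nodup) (hlen : l.length ≤ 3)
    (h : [x, y] <+ l) : l[2]? ≠ some x := by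
  intro h2
  have hlen3 : l.length = 3 := le_antisymm hlen (getElem?_eq_some_iff.mp h2).1
  refine getElem?_zero_ne_of_pair_sublist (nodup_reverse.mpr hl) (reverse_sublist.mpr h) ?_
  rw [getElem?_reverse (by omega), hlen3]
  exact h2

end List

section Restriction

variable [DecidableEq α]

lemma pair_sublist_restr {S : Finset α} {w : List α} {x y : α} (h : [x, y] <+ w)
    (hx : x ∈ S) (hy : y ∈ S) : [x, y] <+ restr S w := by
  simpa [restr, hx, hy] using h.filter (fun z => decide (z ∈ S))

lemma length_restr_le_card {S : Finset α} {w : List α} (hw : w.Nodup) :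
    (restr S w).length ≤ S.card := by
  have hnd : (restr S w).Nodup := hw.filter _
  rw [← List.toFinset_card_of_nodup hnd]
  exact Finset.card_le_card fun z hz => by simp_all [restr]

lemma restr_restr {S T : Finset α} (h : S ⊆ T) (w : List α) :
    restr S (restr T w) = restr S w := by
  simp only [restr, List.filter_filter]
  exact List.filter_congr fun z _ => by by_cases hz : z ∈ S <;> simp [hz, h _]

lemma restr_append (S : Finset α) (p q : List α) :
    restr S (p ++ q) = restr S p ++ restr S q :=
  List.filter_append _ _

lemma restr_eq_nil {S : Finset α} {w : List α} (h : ∀ z ∈ w, z ∉ S) : restr S w = [] := by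
  simpa [restr] using h

lemma Never.of_restr_eq {D D' : Set (List α)} {a b c x : α} {i : ℕ}
    (h : ∀ w ∈ D, ∃ p ∈ D', restr {a, b, c} w = restr {a, b, c} p)
    (hn : Never D' a b c x i) : Never D a b c x i := by
  intro w hw
  obtain ⟨p, hp, hwp⟩ := h w hw
  rw [hwp]
  exact hn p hp

lemma never_one_of_pair_sublist {D : Set (List α)} {a b c x : α}
    (hx : x ∈ ({a, b, c} : Finset α))
    (hD : ∀ w ∈ D, w.Nodup ∧ ∃ y ∈ ({a, b, c} : Finset α), [y, x] <+ w) :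
    Never D a b c x 1 := by
  intro w hw
  obtain ⟨hnd, y, hy, hyx⟩ := hD w hw
  exact List.getElem?_zero_ne_of_pair_sublist (hnd.filter _) (pair_sublist_restr hyx hy hx)

lemma never_three_of_pair_sublist {D : Set (List α)} {a b c x : α}
    (hx : x ∈ ({a, b, c} : Finset α))
    (hD : ∀ w ∈ D, w.Nodup ∧ ∃ y ∈ ({a, b, c} : Finset α), [x, y] <+ w) :
    Never D a b c x 3 := by
  intro w hw
  obtain ⟨hnd, y, hy, hxy⟩ := hD w hw
  exact List.getElem?_two_ne_of_pair_sublist (hnd.filter _)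
    ((length_restr_le_card hnd).trans Finset.card_le_three) (pair_sublist_restr hxy hx hy)

end Restriction

section Tensor

variable [DecidableEq α] {A B : Finset α} {D1 D2 : Set (List α)} {u v w : List α} {a b c : α}

lemma IsLinOrd.mem_iff {S : Finset α} {p : List α} {x : α} (hp : IsLinOrd S p) :
    x ∈ p ↔ x ∈ S := by
  rw [← List.mem_toFinset, hp.2]

lemma nodup_of_mem_tensor (hAB : Disjoint A B) (h1 : ∀ p ∈ D1, IsLinOrd A p)
    (h2 : ∀ q ∈ D2, IsLinOrd B q) (hw : w ∈ tensor A B D1 D2 u v) : w.Nodup := by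
  rcases hw with ⟨p, hp, q, hq, rfl⟩ | ⟨hw, -⟩
  · refine List.nodup_append.mpr ⟨(h1 p hp).1, (h2 q hq).1, ?_⟩
    rintro x hx y hy rfl
    exact Finset.disjoint_left.mp hAB ((h1 p hp).mem_iff.mp hx) ((h2 q hq).mem_iff.mp hy)
  · exact hw.1

lemma exists_restr_eq_of_subset_left (hAB : Disjoint A B) (h2 : ∀ q ∈ D2, IsLinOrd B q)
    (hu : u ∈ D1) {S : Finset α} (hS : S ⊆ A) (hw : w ∈ tensor A B D1 D2 u v) :
    ∃ p ∈ D1, restr S w = restr S p := by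
  rcases hw with ⟨p, hp, q, hq, rfl⟩ | ⟨-, hwu, -⟩
  · refine ⟨p, hp, ?_⟩
    have hq : restr S q = [] := restr_eq_nil fun z hz hzS =>
      Finset.disjoint_left.mp hAB (hS hzS) ((h2 q hq).mem_iff.mp hz)
    rw [restr_append, hq, List.append_nil]
  · exact ⟨u, hu, by rw [← restr_restr hS, hwu]⟩

lemma exists_restr_eq_of_subset_right (hAB : Disjoint A B) (h1 : ∀ p ∈ D1, IsLinOrd A p)
    (hv : v ∈ D2) {S : Finset α} (hS : S ⊆ B) (hw : w ∈ tensor A B D1 D2 u v) :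
    ∃ q ∈ D2, restr S w = restr S q := by
  rcases hw with ⟨p, hp, q, hq, rfl⟩ | ⟨-, -, hwv⟩
  · refine ⟨q, hq, ?_⟩
    have hp : restr S p = [] := restr_eq_nil fun z hz hzS =>
      Finset.disjoint_left.mp hAB ((h1 p hp).mem_iff.mp hz) (hS hzS)
    rw [restr_append, hp, List.nil_append]
  · exact ⟨v, hv, by rw [← restr_restr hS, hwv]⟩

lemma pair_sublist_of_mem_tensor_left (h1 : ∀ p ∈ D1, IsLinOrd A p)
    (h2 : ∀ q ∈ D2, IsLinOrd B q) {x y z : α} (hx : x ∈ A) (hz : z ∈ B) (hxy : [x, y] <+ u)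
    (hw : w ∈ tensor A B D1 D2 u v) : [x, y] <+ w ∨ [x, z] <+ w := by
  rcases hw with ⟨p, hp, q, hq, rfl⟩ | ⟨-, hwu, -⟩
  · exact .inr <| (List.singleton_sublist.mpr ((h1 p hp).mem_iff.mpr hx)).append
      (List.singleton_sublist.mpr ((h2 q hq).mem_iff.mpr hz))
  · exact .inl <| hxy.trans (hwu ▸ List.filter_sublist)

lemma pair_sublist_of_mem_tensor_right (h1 : ∀ p ∈ D1, IsLinOrd A p)
    (h2 : ∀ q ∈ D2, IsLinOrd B q) {x y z : α} (hx : x ∈ A) (hz : z ∈ B) (hyz : [y, z] <+ v)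
    (hw : w ∈ tensor A B D1 D2 u v) : [y, z] <+ w ∨ [x, z] <+ w := by
  rcases hw with ⟨p, hp, q, hq, rfl⟩ | ⟨-, -, hwv⟩
  · exact .inr <| (List.singleton_sublist.mpr ((h1 p hp).mem_iff.mpr hx)).append
      (List.singleton_sublist.mpr ((h2 q hq).mem_iff.mpr hz))
  · exact .inl <| hyz.trans (hwv ▸ List.filter_sublist)


lemma exists_never_of_subset_left (hAB : Disjoint A B) (h2 : ∀ q ∈ D2, IsLinOrd B q)
    (hu : u ∈ D1) (hp1 : PeakPit A D1) (ha : a ∈ A) (hb : b ∈ A) (hc : c ∈ A) (hab : a ≠ b)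
    (hac : a ≠ c) (hbc : b ≠ c) :
    ∃ x ∈ ({a, b, c} : Finset α),
      Never (tensor A B D1 D2 u v) a b c x 1 ∨ Never (tensor A B D1 D2 u v) a b c x 3 := by
  have hS : ({a, b, c} : Finset α) ⊆ A := by simp [Finset.insert_subset_iff, ha, hb, hc]
  obtain ⟨x, hx, hn⟩ := hp1 a ha b hb c hc hab hac hbc
  have hrestr := fun w (hw : w ∈ tensor A B D1 D2 u v) =>
    exists_restr_eq_of_subset_left hAB h2 hu hS hw
  exact ⟨x, hx, hn.imp (Never.of_restr_eq hrestr) (Never.of_restr_eq hrestr)⟩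

lemma exists_never_of_subset_right (hAB : Disjoint A B) (h1 : ∀ p ∈ D1, IsLinOrd A p)
    (hv : v ∈ D2) (hp2 : PeakPit B D2) (ha : a ∈ B) (hb : b ∈ B) (hc : c ∈ B) (hab : a ≠ b)
    (hac : a ≠ c) (hbc : b ≠ c) :
    ∃ x ∈ ({a, b, c} : Finset α),
      Never (tensor A B D1 D2 u v) a b c x 1 ∨ Never (tensor A B D1 D2 u v) a b c x 3 := by
  have hS : ({a, b, c} : Finset α) ⊆ B := by simp [Finset.insert_subset_iff, ha, hb, hc]
  obtain ⟨x, hx, hn⟩ := hp2 a ha b hb c hc hab hac hbc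
  have hrestr := fun w (hw : w ∈ tensor A B D1 D2 u v) =>
    exists_restr_eq_of_subset_right hAB h1 hv hS hw
  exact ⟨x, hx, hn.imp (Never.of_restr_eq hrestr) (Never.of_restr_eq hrestr)⟩

lemma never_three_of_pair_sublist_left (hAB : Disjoint A B) (h1 : ∀ p ∈ D1, IsLinOrd A p)
    (h2 : ∀ q ∈ D2, IsLinOrd B q) {x y z : α} (hx : x ∈ A) (hz : z ∈ B) (hxy : [x, y] <+ u)
    (hxS : x ∈ ({a, b, c} : Finset α)) (hyS : y ∈ ({a, b, c} : Finset α))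
    (hzS : z ∈ ({a, b, c} : Finset α)) :
    Never (tensor A B D1 D2 u v) a b c x 3 :=
  never_three_of_pair_sublist hxS fun _ hw => ⟨nodup_of_mem_tensor hAB h1 h2 hw,
    (pair_sublist_of_mem_tensor_left h1 h2 hx hz hxy hw).elim (⟨y, hyS, ·⟩) (⟨z, hzS, ·⟩)⟩

lemma never_one_of_pair_sublist_right (hAB : Disjoint A B) (h1 : ∀ p ∈ D1, IsLinOrd A p)
    (h2 : ∀ q ∈ D2, IsLinOrd B q) {x y z : α} (hx : x ∈ A) (hz : z ∈ B) (hyz : [y, z] <+ v)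
    (hxS : x ∈ ({a, b, c} : Finset α)) (hyS : y ∈ ({a, b, c} : Finset α))
    (hzS : z ∈ ({a, b, c} : Finset α)) :
    Never (tensor A B D1 D2 u v) a b c z 1 :=
  never_one_of_pair_sublist hzS fun _ hw => ⟨nodup_of_mem_tensor hAB h1 h2 hw,
    (pair_sublist_of_mem_tensor_right h1 h2 hx hz hyz hw).elim (⟨y, hyS, ·⟩) (⟨x, hxS, ·⟩)⟩

lemma exists_never_of_two_left (hAB : Disjoint A B) (h1 : ∀ p ∈ D1, IsLinOrd A p)
    (h2 : ∀ q ∈ D2, IsLinOrd B q) (hu : u ∈ D1) {x y z : α} (hx : x ∈ A) (hy : y ∈ A)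
    (hz : z ∈ B) (hxy : x ≠ y) (hxS : x ∈ ({a, b, c} : Finset α))
    (hyS : y ∈ ({a, b, c} : Finset α)) (hzS : z ∈ ({a, b, c} : Finset α)) :
    ∃ t ∈ ({a, b, c} : Finset α),
      Never (tensor A B D1 D2 u v) a b c t 1 ∨ Never (tensor A B D1 D2 u v) a b c t 3 := by
  rcases List.pair_sublist_or_pair_sublist ((h1 u hu).mem_iff.mpr hx) ((h1 u hu).mem_iff.mpr hy) hxy with h | h
  · exact ⟨x, hxS, .inr (never_three_of_pair_sublist_left hAB h1 h2 hx hz h hxS hyS hzS)⟩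
  · exact ⟨y, hyS, .inr (never_three_of_pair_sublist_left hAB h1 h2 hy hz h hyS hxS hzS)⟩

lemma exists_never_of_two_right (hAB : Disjoint A B) (h1 : ∀ p ∈ D1, IsLinOrd A p)
    (h2 : ∀ q ∈ D2, IsLinOrd B q) (hv : v ∈ D2) {x y z : α} (hx : x ∈ A) (hy : y ∈ B)
    (hz : z ∈ B) (hyz : y ≠ z) (hxS : x ∈ ({a, b, c} : Finset α))
    (hyS : y ∈ ({a, b, c} : Finset α)) (hzS : z ∈ ({a, b, c} : Finset α)) :
    ∃ t ∈ ({a, b, c} : Finset α),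
      Never (tensor A B D1 D2 u v) a b c t 1 ∨ Never (tensor A B D1 D2 u v) a b c t 3 := by
  rcases List.pair_sublist_or_pair_sublist ((h2 v hv).mem_iff.mpr hy) ((h2 v hv).mem_iff.mpr hz) hyz with h | h
  · exact ⟨z, hzS, .inl (never_one_of_pair_sublist_right hAB h1 h2 hx hz h hxS hyS hzS)⟩
  · exact ⟨y, hyS, .inl (never_one_of_pair_sublist_right hAB h1 h2 hx hy h hxS hzS hyS)⟩

end Tensor

/-- if `D1`, `D2` are peak-pit Condorcet domains then
`(D1 ⊗ D2)(u,v)` is a peak-pit domain. -/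
theorem stmt_6 [DecidableEq α] (A B : Finset α) (hAB : Disjoint A B)
    (D1 D2 : Set (List α))
    (h1 : IsCondorcet A D1) (h2 : IsCondorcet B D2)
    (hp1 : PeakPit A D1) (hp2 : PeakPit B D2)
    (u v : List α) (hu : u ∈ D1) (hv : v ∈ D2) :
    PeakPit (A ∪ B) (tensor A B D1 D2 u v) := by
  intro a ha b hb c hc hab hac hbc
  have haS : a ∈ ({a, b, c} : Finset α) := by simp
  have hbS : b ∈ ({a, b, c} : Finset α) := by simp
  have hcS : c ∈ ({a, b, c} : Finset α) := by simp
  have h1 := h1.1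
  have h2 := h2.1
  rcases Finset.mem_union.mp ha with ha | ha <;> rcases Finset.mem_union.mp hb with hb | hb <;>
    rcases Finset.mem_union.mp hc with hc | hc
  · exact exists_never_of_subset_left hAB h2 hu hp1 ha hb hc hab hac hbc
  · exact exists_never_of_two_left hAB h1 h2 hu ha hb hc hab haS hbS hcS
  · exact exists_never_of_two_left hAB h1 h2 hu ha hc hb hac haS hcS hbS
  · exact exists_never_of_two_right hAB h1 h2 hv ha hb hc hbc haS hbS hcS
  · exact exists_never_of_two_left hAB h1 h2 hu hb hc ha hbc hbS hcS haS
  · exact exists_never_of_two_right hAB h1 h2 hv hb ha hc hac hbS haS hcS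
  · exact exists_never_of_two_right hAB h1 h2 hv hc ha hb hab hcS haS hbS
  · exact exists_never_of_subset_right hAB h1 hv hp2 ha hb hc hab hac hbc
end
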